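/- arXiv:2207.14098 — 2 statements merged into one kernel-verified Lean document; each statement's English description precedes it below -/
import Mathlib

section
/- Define S : ℝ² → ℝ² by S(x) = (max(x₁, x₂ − arctan(x₂−x₁)), max(x₂, x₁ + arctan(x₂−x₁))). Then S is order-preserving for the entrywise order on ℝ², each component of S is a convex function on ℝ², and for the sequence a_0 = 1, a_{k+1} = arctan(a_k), one has S^k(−1, 0) = (−a_k, 0) for all k ∈ ℕ. -/
open Filter Topology

private noncomputable def fATM : ℝ → ℝ := fun t => t - Real.arctan t

private lemma fATM_hasDeriv (t : ℝ) :
    HasDerivAt fATM (1 - 1 / (1 + t ^ 2)) t :=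
  (hasDerivAt_id t).sub (Real.hasDerivAt_arctan t)

private lemma fATM_diff : Differentiable ℝ fATM :=
  fun t => (fATM_hasDeriv t).differentiableAt

private lemma fATM_deriv (t : ℝ) : deriv fATM t = 1 - 1 / (1 + t ^ 2) :=
  (fATM_hasDeriv t).deriv

private lemma fATM_mono : Monotone fATM := by
  apply monotone_of_deriv_nonneg fATM_diff
  intro t
  rw [fATM_deriv]
  have h1 : (0:ℝ) < 1 + t ^ 2 := by positivity
  have h2 : 1 / (1 + t ^ 2) ≤ 1 := by
    rw [div_le_one h1]; nlinarith [sq_nonneg t]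
  linarith

private lemma fATM_zero : fATM 0 = 0 := by simp [fATM]

private lemma arctan_le_self {x : ℝ} (hx : 0 ≤ x) : Real.arctan x ≤ x := by
  have := fATM_mono hx
  rw [fATM_zero] at this
  simpa [fATM] using this

private lemma self_le_arctan {x : ℝ} (hx : x ≤ 0) : x ≤ Real.arctan x := by
  have := fATM_mono hx
  rw [fATM_zero] at this
  simpa [fATM] using this

private lemma fATM_convexOn : ConvexOn ℝ (Set.Ici (0:ℝ)) fATM := by
  apply MonotoneOn.convexOn_of_deriv (convex_Ici 0)
    fATM_diff.continuous.continuousOn fATM_diff.differentiableOn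
  intro x hx y hy hxy
  rw [fATM_deriv, fATM_deriv]
  rw [interior_Ici] at hx hy
  have hx0 : (0:ℝ) < x := hx
  have h1 : (0:ℝ) < 1 + x ^ 2 := by positivity
  have h2 : (0:ℝ) < 1 + y ^ 2 := by positivity
  have : 1 / (1 + y ^ 2) ≤ 1 / (1 + x ^ 2) := by
    apply one_div_le_one_div_of_le h1
    nlinarith
  linarith

private noncomputable def hATM : ℝ → ℝ := fun t => fATM (max t 0)

private lemma hATM_convexOn : ConvexOn ℝ Set.univ hATM := by
  have himg : (fun t : ℝ => max t 0) '' Set.univ = Set.Ici 0 := by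
    ext y
    constructor
    · rintro ⟨t, -, rfl⟩; exact le_max_right t 0
    · intro hy; exact ⟨y, trivial, max_eq_left hy⟩
  have hmax : ConvexOn ℝ Set.univ (fun t : ℝ => max t 0) :=
    (convexOn_id convex_univ).sup (convexOn_const 0 convex_univ)
  have := ConvexOn.comp (f := fun t : ℝ => max t 0) (g := fATM)
    (by rw [himg]; exact fATM_convexOn) hmax
    (by rw [himg]; exact fATM_mono.monotoneOn _)
  exact this

private lemma hATM_eq (x₁ x₂ : ℝ) :
    max x₁ (x₂ - Real.arctan (x₂ - x₁)) = x₁ + hATM (x₂ - x₁) := by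
  rcases le_or_gt 0 (x₂ - x₁) with h | h
  · rw [hATM, max_eq_left h]
    have := arctan_le_self h
    rw [max_eq_right (by linarith)]
    simp [fATM]; ring
  · rw [hATM, max_eq_right h.le, fATM_zero]
    have := self_le_arctan h.le
    rw [max_eq_left (by linarith)]
    ring

private lemma hATM_eq' (x₁ x₂ : ℝ) :
    max x₂ (x₁ + Real.arctan (x₂ - x₁)) = x₂ + hATM (x₁ - x₂) := by
  have := hATM_eq x₂ x₁
  have harc : Real.arctan (x₁ - x₂) = - Real.arctan (x₂ - x₁) := by
    rw [show x₁ - x₂ = -(x₂ - x₁) by ring, Real.arctan_neg]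
  rw [harc] at this
  rw [← this]
  congr 1
  ring

/-- the map S(x) = (max(x₁, x₂ − arctan(x₂−x₁)), max(x₂, x₁ + arctan(x₂−x₁)))
is order-preserving for the entrywise order on ℝ², each component is convex, and
S^k(−1,0) = (−a_k, 0) where a_0 = 1, a_{k+1} = arctan(a_k). -/
theorem arctan_max_example
    (S : ℝ × ℝ → ℝ × ℝ)
    (hS : ∀ p : ℝ × ℝ,
      S p = (max p.1 (p.2 - Real.arctan (p.2 - p.1)),
             max p.2 (p.1 + Real.arctan (p.2 - p.1))))
    (a : ℕ → ℝ) (h0 : a 0 = 1) (hrec : ∀ k, a (k + 1) = Real.arctan (a k)) :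
    (∀ p q : ℝ × ℝ, p ≤ q → S p ≤ S q) ∧
      ConvexOn ℝ Set.univ (fun p : ℝ × ℝ => (S p).1) ∧
      ConvexOn ℝ Set.univ (fun p : ℝ × ℝ => (S p).2) ∧
      ∀ k : ℕ, S^[k] (-1, 0) = (-(a k), 0) := by
  have hmono_S1 : ∀ p q : ℝ × ℝ, p ≤ q →
      p.2 - Real.arctan (p.2 - p.1) ≤ q.2 - Real.arctan (q.2 - q.1) := by
    intro p q hpq
    obtain ⟨h1, h2⟩ := hpq
    have step1 : p.2 - Real.arctan (p.2 - p.1) ≤ q.2 - Real.arctan (q.2 - p.1) := by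
      have := fATM_mono (sub_le_sub_right h2 p.1)
      simp only [fATM] at this
      linarith
    have step2 : q.2 - Real.arctan (q.2 - p.1) ≤ q.2 - Real.arctan (q.2 - q.1) := by
      have := Real.arctan_strictMono.monotone (sub_le_sub_left h1 q.2)
      linarith
    linarith
  have hmono_S2 : ∀ p q : ℝ × ℝ, p ≤ q →
      p.1 + Real.arctan (p.2 - p.1) ≤ q.1 + Real.arctan (q.2 - q.1) := by
    intro p q hpq
    obtain ⟨h1, h2⟩ := hpq
    have step1 : p.1 + Real.arctan (p.2 - p.1) ≤ p.1 + Real.arctan (q.2 - p.1) := by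
      have := Real.arctan_strictMono.monotone (sub_le_sub_right h2 p.1)
      linarith
    have step2 : p.1 + Real.arctan (q.2 - p.1) ≤ q.1 + Real.arctan (q.2 - q.1) := by
      have := fATM_mono (sub_le_sub_left h1 q.2)
      simp only [fATM] at this
      linarith
    linarith
  refine ⟨?_, ?_, ?_, ?_⟩
  · intro p q hpq
    rw [hS p, hS q]
    constructor
    · exact max_le_max hpq.1 (hmono_S1 p q hpq)
    · exact max_le_max hpq.2 (hmono_S2 p q hpq)
  · -- convexity of first component
    have key : (fun p : ℝ × ℝ => (S p).1) = fun p => p.1 + hATM (p.2 - p.1) := by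
      funext p; rw [hS p]; exact hATM_eq p.1 p.2
    rw [key]
    constructor
    · exact convex_univ
    · intro p _ q _ α β hα hβ hαβ
      have hh := hATM_convexOn.2 (Set.mem_univ (p.2 - p.1)) (Set.mem_univ (q.2 - q.1)) hα hβ hαβ
      simp only [smul_eq_mul, Prod.smul_fst, Prod.smul_snd, Prod.fst_add, Prod.snd_add] at *
      have heq : (α * p.2 + β * q.2) - (α * p.1 + β * q.1)
          = α * (p.2 - p.1) + β * (q.2 - q.1) := by ring
      rw [heq]
      linarith
  · -- convexity of second component
    have key : (fun p : ℝ × ℝ => (S p).2) = fun p => p.2 + hATM (p.1 - p.2) := by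
      funext p; rw [hS p]; exact hATM_eq' p.1 p.2
    rw [key]
    constructor
    · exact convex_univ
    · intro p _ q _ α β hα hβ hαβ
      have hh := hATM_convexOn.2 (Set.mem_univ (p.1 - p.2)) (Set.mem_univ (q.1 - q.2)) hα hβ hαβ
      simp only [smul_eq_mul, Prod.smul_fst, Prod.smul_snd, Prod.fst_add, Prod.snd_add] at *
      have heq : (α * p.1 + β * q.1) - (α * p.2 + β * q.2)
          = α * (p.1 - p.2) + β * (q.1 - q.2) := by ring
      rw [heq]
      linarith
  · -- iteration
    have hpos : ∀ k, 0 < a k := by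
      intro k
      induction k with
      | zero => rw [h0]; norm_num
      | succ n ih =>
        rw [hrec n]
        have : Real.arctan 0 < Real.arctan (a n) := Real.arctan_strictMono ih
        rwa [Real.arctan_zero] at this
    intro k
    induction k with
    | zero => simp [h0]
    | succ n ih =>
      rw [Function.iterate_succ_apply', ih, hS]
      have hk := hpos n
      have harc : Real.arctan (a n) ≤ a n := arctan_le_self hk.le
      simp only [Prod.mk.injEq]
      constructor
      · have h1 : (0:ℝ) - Real.arctan (0 - -(a n)) = -Real.arctan (a n) := by
          simp
        rw [h1, max_eq_right (by linarith), hrec n]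
      · rw [show (0:ℝ) - -(a n) = a n by ring]
        rw [max_eq_left (by linarith)]
end

section
/- Let T : ℝ² → ℝ² be given by T(x) = (½(x₁+x₂) − arctan(½(x₂−x₁)), ½(x₁+x₂) + arctan(½(x₂−x₁))) and let f := exp ∘ T ∘ log : ℝ²_{>0} → ℝ²_{>0}. Then f is order-preserving and homogeneous, and for x = (e^{−1}, e) the iterates f^k(x) converge to the fixed point (1,1) of f, but limsup_{k→∞} d_T(f^k(x), (1,1))^{1/k} = 1; that is, the convergence is not at a linear rate in Thompson's metric. -/
open Filter Topology

/-- `M(x/y) = inf {β > 0 : x ≤ β y}` for the entrywise order on ℝ². -/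
noncomputable def Mratio2 (x y : ℝ × ℝ) : ℝ :=
  sInf {β : ℝ | 0 < β ∧ x ≤ β • y}

/-- Thompson's metric on the positive cone of ℝ². -/
noncomputable def thompsonDist2 (x y : ℝ × ℝ) : ℝ :=
  max (Real.log (Mratio2 x y)) (Real.log (Mratio2 y x))

/-!
In logarithmic coordinates `f` is `T`, which keeps the mean `(u₁ + u₂) / 2` and applies `arctan`
to the half-difference `(u₂ - u₁) / 2`. As `arctan` is monotone and `1`-Lipschitz, `T` is
monotone, and it commutes with translations along the diagonal; this makes `f` order-preserving
and homogeneous. The orbit of `(-1, 1)` stays on the antidiagonal: `fᵏ(x) = (e^{-aₖ}, e^{aₖ})`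
with `aₖ = arctanᵏ 1`, and `d_T(fᵏ(x), (1, 1)) = aₖ`. The iterates `aₖ` decrease to the fixed
point `0` of `arctan`, but only slowly: `arctan t ≥ t / (1 + t²)` gives `aₖ ≥ 1 / (k + 1)`, so
`aₖ^{1/k} → 1`.
-/

namespace Real

variable {x : ℝ}

theorem lipschitzWith_arctan : LipschitzWith 1 arctan :=
  lipschitzWith_of_nnnorm_deriv_le differentiable_arctan fun x => by
    rw [← NNReal.coe_le_coe, coe_nnnorm, deriv_arctan, NNReal.coe_one, norm_div, norm_one,
      norm_of_nonneg (by positivity)]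
    exact div_le_one_of_le₀ (by nlinarith [sq_nonneg x]) (by positivity)

theorem arctan_lt_self (hx : 0 < x) : arctan x < x := by
  simpa only [tan_arctan] using lt_tan (arctan_pos.2 hx) (arctan_lt_pi_div_two x)

theorem arctan_le_self (hx : 0 ≤ x) : arctan x ≤ x := by
  simpa only [tan_arctan] using le_tan (arctan_nonneg.2 hx) (arctan_lt_pi_div_two x)

theorem div_one_add_sq_le_arctan (hx : 0 ≤ x) : x / (1 + x ^ 2) ≤ arctan x := by
  -- with `y = arctan x`, the left side is `sin y cos y = sin (2 y) / 2`
  have hcos : cos (arctan x) ^ 2 = 1 / (1 + x ^ 2) := cos_sq_arctan x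
  have hsin : sin (arctan x) = x * cos (arctan x) := by
    rw [sin_arctan, cos_arctan]; ring
  calc x / (1 + x ^ 2) = sin (2 * arctan x) / 2 := by
        rw [sin_two_mul, hsin, div_eq_mul_one_div, ← hcos]; ring
    _ ≤ 2 * arctan x / 2 := by gcongr; exact sin_le (by positivity [arctan_nonneg.2 hx])
    _ = arctan x := by ring

theorem arctan_iterate_nonneg {x : ℝ} (hx : 0 ≤ x) (k : ℕ) : 0 ≤ arctan^[k] x := by
  induction k with
  | zero => exact hx
  | succ k ih => rw [Function.iterate_succ_apply']; exact arctan_nonneg.2 ih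

theorem arctan_iterate_le_self {x : ℝ} (hx : 0 ≤ x) (k : ℕ) : arctan^[k] x ≤ x :=
  arctan_mono.antitone_iterate_of_map_le (arctan_le_self hx) (Nat.zero_le k)

theorem tendsto_arctan_iterate {x : ℝ} (hx : 0 ≤ x) :
    Tendsto (fun k => arctan^[k] x) atTop (𝓝 0) := by
  have hanti := arctan_mono.antitone_iterate_of_map_le (arctan_le_self hx)
  have hbdd : BddBelow (Set.range fun k => arctan^[k] x) :=
    ⟨0, by rintro _ ⟨k, rfl⟩; exact arctan_iterate_nonneg hx k⟩
  have hlim := tendsto_atTop_ciInf hanti hbdd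
  set L := ⨅ k, arctan^[k] x
  have hfix : arctan L = L := isFixedPt_of_tendsto_iterate hlim continuousAt_arctan
  have hL : L = 0 := by
    by_contra hne
    have hpos : 0 < L := (le_ciInf (arctan_iterate_nonneg hx)).lt_of_ne' hne
    exact (arctan_lt_self hpos).ne hfix
  rwa [hL] at hlim

theorem inv_succ_le_arctan_iterate_one (k : ℕ) : ((k : ℝ) + 1)⁻¹ ≤ arctan^[k] 1 := by
  induction k with
  | zero => simp
  | succ k ih =>
    rw [Function.iterate_succ_apply']
    refine le_trans ?_ (arctan_mono ih)
    calc ((↑(k + 1) : ℝ) + 1)⁻¹ ≤ ((k : ℝ) + 1)⁻¹ / (1 + ((k : ℝ) + 1)⁻¹ ^ 2) := by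
          push_cast
          rw [inv_eq_one_div, inv_eq_one_div, div_le_div_iff₀ (by positivity) (by positivity)]
          field_simp
          nlinarith
      _ ≤ arctan ((k : ℝ) + 1)⁻¹ := div_one_add_sq_le_arctan (by positivity)

theorem tendsto_arctan_iterate_one_rpow_inv :
    Tendsto (fun k : ℕ => (arctan^[k] 1) ^ (k : ℝ)⁻¹) atTop (𝓝 1) := by
  have hlower : Tendsto (fun k : ℕ => ((k : ℝ) + 1)⁻¹ ^ (k : ℝ)⁻¹) atTop (𝓝 1) := by
    have h := (tendsto_rpow_div_mul_add (-1) 1 (-1) one_ne_zero.symm).comp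
      (tendsto_atTop_add_const_right _ 1 tendsto_natCast_atTop_atTop)
    refine h.congr fun k => ?_
    simp only [Function.comp_apply, one_mul, add_neg_cancel_right, neg_div]
    rw [rpow_neg (by positivity), inv_rpow (by positivity), one_div]
  refine tendsto_of_tendsto_of_tendsto_of_le_of_le hlower tendsto_const_nhds (fun k => ?_)
    (fun k => ?_)
  · exact rpow_le_rpow (by positivity) (inv_succ_le_arctan_iterate_one k) (by positivity)
  · exact rpow_le_one (arctan_iterate_nonneg zero_le_one k) (arctan_iterate_le_self zero_le_one k)
      (by positivity)

end Real

open Real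

/-- In the coordinates `m = (u₁ + u₂) / 2`, `d = (u₂ - u₁) / 2` this is `(m, d) ↦ (m, φ d)`. -/
noncomputable def halfDiffMap (φ : ℝ → ℝ) (u : ℝ × ℝ) : ℝ × ℝ :=
  ((u.1 + u.2) / 2 - φ ((u.2 - u.1) / 2), (u.1 + u.2) / 2 + φ ((u.2 - u.1) / 2))

theorem halfDiffMap_monotone {φ : ℝ → ℝ} (hφ : Monotone φ) (hφ₁ : LipschitzWith 1 φ) :
    Monotone (halfDiffMap φ) := by
  intro u v ⟨h₁, h₂⟩
  have hlip : ∀ {a b : ℝ}, a ≤ b → φ b - φ a ≤ b - a := fun {a b} hab => by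
    simpa [Real.dist_eq, abs_of_nonneg (sub_nonneg.2 hab)] using
      (le_abs_self _).trans (hφ₁.dist_le_mul b a)
  constructor <;> dsimp only [halfDiffMap] <;>
    rcases le_total ((u.2 - u.1) / 2) ((v.2 - v.1) / 2) with hd | hd <;>
    linarith [hφ hd, hlip hd]

theorem halfDiffMap_add_diag (φ : ℝ → ℝ) (u : ℝ × ℝ) (t : ℝ) :
    halfDiffMap φ (u + (t, t)) = halfDiffMap φ u + (t, t) := by
  simp only [halfDiffMap, Prod.fst_add, Prod.snd_add, Prod.mk_add_mk, add_sub_add_right_eq_sub]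
  congr 1 <;> ring

theorem halfDiffMap_neg_self (φ : ℝ → ℝ) (b : ℝ) : halfDiffMap φ (-b, b) = (-φ b, φ b) := by
  simp only [halfDiffMap, neg_add_cancel, sub_neg_eq_add, add_self_div_two, zero_div, zero_sub,
    zero_add]

noncomputable def expConj (T : ℝ × ℝ → ℝ × ℝ) : ℝ × ℝ → ℝ × ℝ :=
  Prod.map exp exp ∘ T ∘ Prod.map log log

theorem expConj_map_exp (T : ℝ × ℝ → ℝ × ℝ) (u : ℝ × ℝ) :
    expConj T (Prod.map exp exp u) = Prod.map exp exp (T u) := by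
  simp [expConj, Prod.map]

theorem expConj_le_expConj {T : ℝ × ℝ → ℝ × ℝ} (hT : Monotone T) {p q : ℝ × ℝ} (hp₁ : 0 < p.1)
    (hp₂ : 0 < p.2) (hpq : p ≤ q) : expConj T p ≤ expConj T q := by
  have hlog : Prod.map log log p ≤ Prod.map log log q :=
    ⟨log_le_log hp₁ hpq.1, log_le_log hp₂ hpq.2⟩
  have hT' := hT hlog
  exact ⟨exp_le_exp.2 hT'.1, exp_le_exp.2 hT'.2⟩

theorem expConj_smul {T : ℝ × ℝ → ℝ × ℝ} (hT : ∀ u t, T (u + (t, t)) = T u + (t, t))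
    {p : ℝ × ℝ} (hp₁ : 0 < p.1) (hp₂ : 0 < p.2) {t : ℝ} (ht : 0 < t) :
    expConj T (t • p) = t • expConj T p := by
  have hlog : Prod.map log log (t • p) = Prod.map log log p + (log t, log t) := by
    ext <;> simp [log_mul ht.ne', hp₁.ne', hp₂.ne', add_comm]
  rw [expConj, Function.comp_apply, Function.comp_apply, hlog, hT]
  ext <;> simp [exp_add, exp_log ht, mul_comm]

theorem expConj_halfDiffMap_iterate (φ : ℝ → ℝ) (k : ℕ) (b : ℝ) :
    (expConj (halfDiffMap φ))^[k] (exp (-b), exp b) = (exp (-φ^[k] b), exp (φ^[k] b)) := by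
  have hsemi : Function.Semiconj (fun b : ℝ => (exp (-b), exp b)) φ
      (expConj (halfDiffMap φ)) := fun b => by
    simpa [Prod.map, halfDiffMap_neg_self] using
      (expConj_map_exp (halfDiffMap φ) (-b, b)).symm
  exact (hsemi.iterate_right k b).symm

theorem Mratio2_eq_max {x y : ℝ × ℝ} (hx₁ : 0 < x.1) (hy₁ : 0 < y.1) (hy₂ : 0 < y.2) :
    Mratio2 x y = max (x.1 / y.1) (x.2 / y.2) := by
  have hset : {β : ℝ | 0 < β ∧ x ≤ β • y} = Set.Ici (max (x.1 / y.1) (x.2 / y.2)) := by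
    ext β
    simp only [Set.mem_ofPred_eq, Set.mem_Ici, max_le_iff, Prod.le_def, Prod.smul_fst,
      Prod.smul_snd, smul_eq_mul, div_le_iff₀ hy₁, div_le_iff₀ hy₂]
    constructor
    · exact fun h => h.2
    · exact fun h => ⟨pos_of_mul_pos_left (hx₁.trans_le h.1) hy₁.le, h⟩
  rw [Mratio2, hset, csInf_Ici]

theorem thompsonDist2_eq_max_abs_log {x y : ℝ × ℝ} (hx₁ : 0 < x.1) (hx₂ : 0 < x.2)
    (hy₁ : 0 < y.1) (hy₂ : 0 < y.2) :
    thompsonDist2 x y = max |log (x.1 / y.1)| |log (x.2 / y.2)| := by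
  have hlog_max {a b : ℝ} (ha : 0 < a) (hb : 0 < b) : log (max a b) = max (log a) (log b) :=
    strictMonoOn_log.monotoneOn.map_max ha hb
  rw [thompsonDist2, Mratio2_eq_max hx₁ hy₁ hy₂, Mratio2_eq_max hy₁ hx₁ hx₂,
    hlog_max (div_pos hx₁ hy₁) (div_pos hx₂ hy₂), hlog_max (div_pos hy₁ hx₁) (div_pos hy₂ hx₂),
    ← inv_div x.1, ← inv_div x.2, log_inv, log_inv, max_max_max_comm, abs_eq_max_neg,
    abs_eq_max_neg]

theorem thompsonDist2_exp_neg_exp_one (a : ℝ) : thompsonDist2 (exp (-a), exp a) (1, 1) = |a| := by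
  rw [thompsonDist2_eq_max_abs_log (exp_pos _) (exp_pos _) one_pos one_pos]
  simp

/-- with T(x) = (½(x₁+x₂) − arctan(½(x₂−x₁)), ½(x₁+x₂) + arctan(½(x₂−x₁)))
and f = exp ∘ T ∘ log on ℝ²_{>0}, f is order-preserving and homogeneous, the iterates of
x = (e⁻¹, e) converge to the fixed point (1,1), but
limsup d_T(f^k(x), (1,1))^{1/k} = 1: the convergence is not R-linear. -/
theorem arctan_example_sublinear_convergence
    (T : ℝ × ℝ → ℝ × ℝ)
    (hT : ∀ p : ℝ × ℝ,
      T p = ((p.1 + p.2) / 2 - Real.arctan ((p.2 - p.1) / 2),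
             (p.1 + p.2) / 2 + Real.arctan ((p.2 - p.1) / 2)))
    (f : ℝ × ℝ → ℝ × ℝ)
    (hf : ∀ p : ℝ × ℝ,
      f p = (Real.exp ((T (Real.log p.1, Real.log p.2)).1),
             Real.exp ((T (Real.log p.1, Real.log p.2)).2))) :
    (∀ p q : ℝ × ℝ, 0 < p.1 → 0 < p.2 → 0 < q.1 → 0 < q.2 → p ≤ q → f p ≤ f q) ∧
    (∀ p : ℝ × ℝ, 0 < p.1 → 0 < p.2 → ∀ t : ℝ, 0 < t → f (t • p) = t • f p) ∧
    f (1, 1) = (1, 1) ∧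
    Tendsto (fun k => f^[k] (Real.exp (-1), Real.exp 1)) atTop (𝓝 (1, 1)) ∧
    limsup (fun k =>
        thompsonDist2 (f^[k] (Real.exp (-1), Real.exp 1)) (1, 1) ^ ((k : ℝ)⁻¹)) atTop = 1 := by
  obtain rfl : T = halfDiffMap arctan := funext hT
  have hf' : f = expConj (halfDiffMap arctan) := funext hf
  have horbit : ∀ k : ℕ, f^[k] (exp (-1), exp 1) = (exp (-arctan^[k] 1), exp (arctan^[k] 1)) :=
    fun k => hf' ▸ expConj_halfDiffMap_iterate arctan k 1
  have hdist : ∀ k : ℕ, thompsonDist2 (f^[k] (exp (-1), exp 1)) (1, 1) = arctan^[k] 1 :=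
    fun k => by rw [horbit, thompsonDist2_exp_neg_exp_one,
      abs_of_nonneg (arctan_iterate_nonneg zero_le_one k)]
  refine ⟨fun p q hp₁ hp₂ _ _ hpq => ?_, fun p hp₁ hp₂ t ht => ?_, ?_, ?_, ?_⟩
  · rw [hf']
    exact expConj_le_expConj (halfDiffMap_monotone arctan_mono lipschitzWith_arctan) hp₁ hp₂ hpq
  · rw [hf']
    exact expConj_smul (halfDiffMap_add_diag arctan) hp₁ hp₂ ht
  · simpa [hf'] using expConj_halfDiffMap_iterate arctan 1 0
  · simp only [horbit]
    have hexp : Continuous fun a : ℝ => (exp (-a), exp a) :=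
      (continuous_exp.comp continuous_neg).prodMk continuous_exp
    simpa [Function.comp_def] using (hexp.tendsto 0).comp (tendsto_arctan_iterate zero_le_one)
  · simp only [hdist]
    exact tendsto_arctan_iterate_one_rpow_inv.limsup_eq
end
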